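/- Let $X_1,\ldots,X_n$ be $\{0,1\}$-valued random variables and let $0 < \alpha < \beta < 1$. Suppose $k = \frac{\beta-\alpha}{1-\alpha} n$ is a positive integer, and that for every subset $S \subseteq \{1,\ldots,n\}$ with $|S| = k$ we have $\Pr(\forall i \in S, X_i = 1) \le \alpha^k$. Then $\Pr\left(\sum_{i=1}^n X_i \ge \beta n\right) \le e^{-D(\beta\|\alpha) n}$, where $D(\beta\|\alpha) = \beta \ln(\beta/\alpha) + (1-\beta)\ln((1-\beta)/(1-\alpha))$ is the Kullback-Leibler divergence between Bernoulli($\beta$) and Bernoulli($\alpha$). -/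

import Mathlib

/-!
Let `m = ⌈β n⌉`. On the event `β n ≤ ∑ Xᵢ` at least `m` coordinates equal one, so at least
`C(m, k)` of the `k`-sets `S` have `X_S ≡ 1`; integrating this count (Markov) gives
`C(m, k) · P(β n ≤ ∑ Xᵢ) ≤ ∑_S P(X_S ≡ 1) ≤ C(n, k) αᵏ`.
It remains to show `C(n, k) αᵏ ≤ C(m, k) e^{-D n}`. As `x ↦ x(x-1)⋯(x-k+1)` increases for
`x ≥ k - 1`, we may replace `m` by `β n`; the log of the ratio of falling factorials at `n` and
`β n` is `∑_{j<k} (log (n - j) - log (β n - j))`. The summand increases in `j`, so the sum is at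
most the integral over `[0, k]`, which for `k = (β - α) n / (1 - α)` equals `-k log α - D(β‖α) n`.
-/

open MeasureTheory ProbabilityTheory Finset Real
open scoped ENNReal

noncomputable def bernoulliKL (β α : ℝ) : ℝ :=
  β * log (β / α) + (1 - β) * log ((1 - β) / (1 - α))

open scoped Classical in
theorem natCast_mul_measure_le_sum_measure {Ω ι : Type*} [MeasurableSpace Ω] (μ : Measure Ω)
    {s : Finset ι} {B : ι → Set Ω} (hB : ∀ i ∈ s, MeasurableSet (B i)) {A : Set Ω} {M : ℕ}
    (hA : ∀ ω ∈ A, M ≤ #{i ∈ s | ω ∈ B i}) :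
    M * μ A ≤ ∑ i ∈ s, μ (B i) := by
  set f : Ω → ℝ≥0∞ := fun ω ↦ ∑ i ∈ s, (B i).indicator 1 ω
  have hf : ∀ ω, f ω = #{i ∈ s | ω ∈ B i} := fun ω ↦ by
    simp [f, Set.indicator_apply, Finset.sum_boole]
  calc (M : ℝ≥0∞) * μ A ≤ M * μ {ω | (M : ℝ≥0∞) ≤ f ω} := by
        gcongr
        intro ω hω
        simpa [hf] using hA ω hω
    _ ≤ ∫⁻ ω, f ω ∂μ :=
        mul_meas_ge_le_lintegral₀ (Finset.aemeasurable_fun_sum _ fun i hi ↦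
          (measurable_one.indicator (hB i hi)).aemeasurable) _
    _ = ∑ i ∈ s, μ (B i) := by
        rw [lintegral_finsetSum' s fun i hi ↦ (measurable_one.indicator (hB i hi)).aemeasurable]
        exact Finset.sum_congr rfl fun i hi ↦ lintegral_indicator_one (hB i hi)

theorem Finset.sum_eq_card_filter_eq_one {ι R : Type*} [AddCommMonoidWithOne R] [DecidableEq R]
    {s : Finset ι} {f : ι → R} (hf : ∀ i ∈ s, f i = 0 ∨ f i = 1) :
    ∑ i ∈ s, f i = #{i ∈ s | f i = 1} := by
  rw [← Finset.sum_boole]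
  refine Finset.sum_congr rfl fun i hi ↦ ?_
  rcases hf i hi with h | h <;> simp [h]

theorem ceil_choose_mul_measure_le_sum_measure {Ω ι : Type*} [MeasurableSpace Ω] [Fintype ι]
    (μ : Measure Ω) (X : ι → Ω → ℝ) (hX : ∀ i, Measurable (X i))
    (h01 : ∀ i ω, X i ω = 0 ∨ X i ω = 1) (t : ℝ) (k : ℕ) :
    (⌈t⌉₊.choose k : ℝ≥0∞) * μ {ω | t ≤ ∑ i, X i ω} ≤
      ∑ S ∈ powersetCard k univ, μ {ω | ∀ i ∈ S, X i ω = 1} := by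
  classical
  refine natCast_mul_measure_le_sum_measure μ (fun S _ ↦ ?_) fun ω hω ↦ ?_
  · simp only [Set.ofPred_forall]
    exact .biInter S.countable_toSet fun i _ ↦ hX i (measurableSet_singleton 1)
  set T : Finset ι := {i | X i ω = 1}
  have hT : ⌈t⌉₊ ≤ #T := by
    rw [Nat.ceil_le, ← Finset.sum_eq_card_filter_eq_one fun i _ ↦ h01 i ω]
    exact hω
  calc ⌈t⌉₊.choose k ≤ (#T).choose k := Nat.choose_le_choose k hT
    _ = #(powersetCard k T) := (card_powersetCard k T).symm
    _ ≤ _ := by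
        refine card_le_card fun S hS ↦ ?_
        have hST := (mem_powersetCard.1 hS).1
        simp only [mem_filter, mem_powersetCard, subset_univ, true_and, Set.mem_ofPred_eq]
        exact ⟨(mem_powersetCard.1 hS).2, fun i hi ↦ (mem_filter.1 (hST hi)).2⟩

namespace Real

theorem integral_log_const_sub (c K : ℝ) :
    ∫ x in (0 : ℝ)..K, log (c - x) = c * log c - (c - K) * log (c - K) - K := by
  rw [intervalIntegral.integral_comp_sub_left (fun u ↦ log u) c, integral_log, sub_zero]
  ring

theorem monotoneOn_log_sub_sub_log_sub {a b : ℝ} (hba : b ≤ a) :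
    MonotoneOn (fun x ↦ log (a - x) - log (b - x)) (Set.Iio b) := by
  intro x hx y hy hxy
  rw [sub_le_sub_iff, ← log_mul (by linarith [hx.out]) (by linarith [hy.out]),
    ← log_mul (by linarith [hy.out]) (by linarith [hx.out])]
  refine log_le_log (mul_pos (by linarith [hx.out]) (by linarith [hy.out])) ?_
  nlinarith

theorem sum_log_sub_sub_log_sub_le {a b : ℝ} {k : ℕ} (hba : b ≤ a) (hkb : k < b) :
    ∑ j ∈ range k, (log (a - j) - log (b - j)) ≤
      a * log a - (a - k) * log (a - k) - (b * log b - (b - k) * log (b - k)) := by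
  have hmono : MonotoneOn (fun x ↦ log (a - x) - log (b - x)) (Set.Icc 0 (0 + k)) :=
    (monotoneOn_log_sub_sub_log_sub hba).mono fun x hx ↦ by
      simp only [zero_add, Set.mem_Icc] at hx
      exact hx.2.trans_lt hkb
  have hint (c : ℝ) : IntervalIntegrable (fun x ↦ log (c - x)) volume 0 k := by
    simpa using (intervalIntegral.intervalIntegrable_log' (a := c) (b := c - k)).comp_sub_left c
  have hsum := hmono.sum_le_integral
  simp only [zero_add] at hsum
  rw [intervalIntegral.integral_sub (hint a) (hint b), integral_log_const_sub,
    integral_log_const_sub] at hsum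
  linarith

end Real

section BinomialRatio

variable {α β n : ℝ} {k : ℕ}

theorem natCast_lt_mul_of_eq_div_mul (hα : 0 < α) (hαβ : α < β) (hβ1 : β < 1) (hn : 0 < n)
    (hk : (k : ℝ) = (β - α) / (1 - α) * n) : (k : ℝ) < β * n := by
  have h1α : 1 - α ≠ 0 := by linarith
  have hβnk : β * n - k = α * ((1 - β) / (1 - α) * n) := by
    rw [hk]; field_simp; ring
  have : 0 < α * ((1 - β) / (1 - α) * n) := by
    have := sub_pos.2 hβ1; have := sub_pos.2 (hαβ.trans hβ1); positivity
  linarith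

theorem mul_log_sub_mul_log_eq_neg_bernoulliKL (hα : 0 < α) (hαβ : α < β) (hβ1 : β < 1)
    (hn : 0 < n) (hk : (k : ℝ) = (β - α) / (1 - α) * n) :
    n * log n - (n - k) * log (n - k) - (β * n * log (β * n) - (β * n - k) * log (β * n - k)) =
      -(k * log α) - bernoulliKL β α * n := by
  have h1α : 0 < 1 - α := by linarith
  have h1α' : 1 - α ≠ 0 := h1α.ne'
  have hγ : 0 < (1 - β) / (1 - α) := div_pos (by linarith) h1α
  have hnk : n - k = (1 - β) / (1 - α) * n := by rw [hk]; field_simp; ring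
  have hβnk : β * n - k = α * ((1 - β) / (1 - α) * n) := by rw [hk]; field_simp; ring
  rw [hnk, hβnk, bernoulliKL, log_mul hα.ne' (by positivity), log_mul hγ.ne' hn.ne',
    log_mul (by linarith) hn.ne', log_div (by linarith) hα.ne', hk]
  field_simp
  ring

theorem descPochhammer_eval_mul_pow_le (hα : 0 < α) (hαβ : α < β) (hβ1 : β < 1) (hn : 0 < n)
    (hk : (k : ℝ) = (β - α) / (1 - α) * n) :
    (descPochhammer ℝ k).eval n * α ^ k ≤
      (descPochhammer ℝ k).eval (β * n) * exp (-bernoulliKL β α * n) := by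
  have hkβn := natCast_lt_mul_of_eq_div_mul hα hαβ hβ1 hn hk
  have hβn : β * n ≤ n := by nlinarith
  have hpos (c : ℝ) (hc : (k : ℝ) ≤ c) : ∀ j ∈ range k, 0 < c - j := fun j hj ↦ by
    have : (j : ℝ) < k := by exact_mod_cast mem_range.1 hj
    linarith
  have hposn := hpos n (hkβn.le.trans hβn)
  have hposβn := hpos (β * n) hkβn.le
  rw [descPochhammer_eval_eq_prod_range, descPochhammer_eval_eq_prod_range,
    ← log_le_log_iff (by have := prod_pos hposn; positivity)
      (by have := prod_pos hposβn; positivity),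
    log_mul (prod_pos hposn).ne' (by positivity), log_mul (prod_pos hposβn).ne' (exp_pos _).ne',
    log_prod fun j hj ↦ (hposn j hj).ne', log_prod fun j hj ↦ (hposβn j hj).ne', log_pow,
    log_exp]
  have hsum := sum_log_sub_sub_log_sub_le hβn hkβn
  rw [mul_log_sub_mul_log_eq_neg_bernoulliKL hα hαβ hβ1 hn hk, sum_sub_distrib] at hsum
  linarith

theorem choose_mul_pow_le_choose_ceil_mul_exp {n : ℕ} (hα : 0 < α) (hαβ : α < β) (hβ1 : β < 1)
    (hn : 0 < n) (hk : (k : ℝ) = (β - α) / (1 - α) * n) :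
    (n.choose k : ℝ) * α ^ k ≤ (⌈β * n⌉₊.choose k : ℝ) * exp (-bernoulliKL β α * n) := by
  have hkβn := natCast_lt_mul_of_eq_div_mul hα hαβ hβ1 (Nat.cast_pos.2 hn) hk
  simp only [Nat.cast_choose_eq_descPochhammer_div, div_mul_eq_mul_div]
  refine div_le_div_of_nonneg_right ?_ (by positivity)
  calc (descPochhammer ℝ k).eval (n : ℝ) * α ^ k
      ≤ (descPochhammer ℝ k).eval (β * n) * exp (-bernoulliKL β α * n) :=
        descPochhammer_eval_mul_pow_le hα hαβ hβ1 (Nat.cast_pos.2 hn) hk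
    _ ≤ (descPochhammer ℝ k).eval (⌈β * n⌉₊ : ℝ) * exp (-bernoulliKL β α * n) := by
        gcongr
        refine monotoneOn_descPochhammer_eval k ?_ ?_ (Nat.le_ceil _)
        · exact Set.mem_Ici.2 (by linarith)
        · exact Set.mem_Ici.2 (by linarith [Nat.le_ceil (β * n)])

end BinomialRatio

theorem stmt_1_general {Ω : Type*} [MeasureSpace Ω] [IsProbabilityMeasure (ℙ : Measure Ω)]
    (n : ℕ) (X : Fin n → Ω → ℝ) (hX : ∀ i, Measurable (X i))
    (h01 : ∀ i ω, X i ω = 0 ∨ X i ω = 1)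
    (α β : ℝ) (hα : 0 < α) (hαβ : α < β) (hβ1 : β < 1)
    (k : ℕ) (hk : (k : ℝ) = (β - α) / (1 - α) * n)
    (hS : ∀ S ∈ Finset.powersetCard k (Finset.univ : Finset (Fin n)),
      ℙ {ω | ∀ i ∈ S, X i ω = 1} ≤ ENNReal.ofReal (α ^ k)) :
    ℙ {ω | β * n ≤ ∑ i, X i ω} ≤
      ENNReal.ofReal
        (Real.exp (-(β * Real.log (β / α) + (1 - β) * Real.log ((1 - β) / (1 - α))) * n)) := by
  obtain rfl | hn := n.eq_zero_or_pos
  · simp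
  have hkm : k ≤ ⌈β * n⌉₊ := by
    exact_mod_cast (natCast_lt_mul_of_eq_div_mul hα hαβ hβ1 (by positivity) hk).le.trans
      (Nat.le_ceil _)
  have hchoose : (⌈β * n⌉₊.choose k : ℝ≥0∞) ≠ 0 := by simpa using (Nat.choose_pos hkm).ne'
  refine (ENNReal.mul_le_mul_iff_right hchoose (ENNReal.natCast_ne_top _)).1 ?_
  calc _ ≤ ∑ S ∈ powersetCard k univ, ℙ {ω | ∀ i ∈ S, X i ω = 1} :=
        ceil_choose_mul_measure_le_sum_measure ℙ X hX h01 _ k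
    _ ≤ n.choose k * ENNReal.ofReal (α ^ k) := by
        simpa using sum_le_card_nsmul _ _ _ hS
    _ = ENNReal.ofReal (n.choose k * α ^ k) := by
        rw [ENNReal.ofReal_mul (by positivity), ENNReal.ofReal_natCast]
    _ ≤ ENNReal.ofReal (⌈β * n⌉₊.choose k * exp (-bernoulliKL β α * n)) :=
        ENNReal.ofReal_le_ofReal (choose_mul_pow_le_choose_ceil_mul_exp hα hαβ hβ1 hn hk)
    _ = _ := by
        rw [ENNReal.ofReal_mul (by positivity), ENNReal.ofReal_natCast]
        rfl

theorem stmt_1 {Ω : Type*} [MeasureSpace Ω] [IsProbabilityMeasure (ℙ : Measure Ω)]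
    (n : ℕ) (X : Fin n → Ω → ℝ) (hX : ∀ i, Measurable (X i))
    (h01 : ∀ i ω, X i ω = 0 ∨ X i ω = 1)
    (α β : ℝ) (hα : 0 < α) (hαβ : α < β) (hβ1 : β < 1)
    (k : ℕ) (hk0 : 0 < k) (hk : (k : ℝ) = (β - α) / (1 - α) * n)
    (hS : ∀ S ∈ Finset.powersetCard k (Finset.univ : Finset (Fin n)),
      ℙ {ω | ∀ i ∈ S, X i ω = 1} ≤ ENNReal.ofReal (α ^ k)) :
    ℙ {ω | β * n ≤ ∑ i, X i ω} ≤
      ENNReal.ofReal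
        (Real.exp (-(β * Real.log (β / α) + (1 - β) * Real.log ((1 - β) / (1 - α))) * n)) :=
  stmt_1_general n X hX h01 α β hα hαβ hβ1 k hk hS
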